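/- Let (X, ρ) and (Y, σ) be metric spaces with X nonempty and ρ(x,z) ≤ 1 for all x, z ∈ X, and let f : X → Y be 1-Lipschitz. Then the following are equivalent: (a) f is privacy-compatible, i.e. for every γ > 0 and δ ∈ (0,1) there exist ε > 0 and a mechanism M : X → (Borel probability measures on Y) achieving both ε-differential privacy and (γ,δ)-utility; (b) the image f(X), as a subspace of (Y,σ), is totally bounded (equivalently, its completion is compact). -/

import Mathlib

/-!
If `f(X)` is not totally bounded, it contains an infinite `r`-separated sequence `f(uₙ)`. The
balls `B(f(uₙ), r/2)` are disjoint and utility gives each of them mass `≥ 1/2` under `M_{uₙ}`;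
privacy and `diam X ≤ 1` turn this into mass `≥ e^{-ε}/2` under the single probability measure
`M_{u₀}`, which is impossible.

Conversely, fix a finite `γ/2`-net `s` of `f(X)` and let `M_x` be the exponential mechanism that
picks `i ∈ s` with probability proportional to `exp(-c σ(f x, i))`. Moving `x` changes every
weight and the normalising sum by a factor at most `e^{c ρ}`, so `M` is `2c`-private, and the
mass outside `B(f x, γ)` is at most `|s| e^{-cγ/2}`, which is `≤ δ` for `c` large.
-/

open MeasureTheory

open Filter Function Metric Real Topology
open scoped ENNReal NNReal

section SeparatedSequence

variable {ι α : Type*} [PseudoMetricSpace α]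

theorem exists_pairwise_le_dist_of_not_totallyBounded_range {f : ι → α}
    (h : ¬TotallyBounded (Set.range f)) :
    ∃ r > 0, ∃ u : ℕ → ι, Pairwise fun m n => r ≤ dist (f (u m)) (f (u n)) := by
  rw [totallyBounded_iff] at h
  push Not at h
  obtain ⟨r, hr, hcover⟩ := h
  have hnext : ∀ t : Finset ι, (∀ i ∈ t, True) →
      ∃ j, True ∧ ∀ i ∈ t, r ≤ dist (f i) (f j) := by
    intro t _
    have hnot := hcover (f '' t) (t.finite_toSet.image f)
    rw [Set.biUnion_image] at hnot
    obtain ⟨_, ⟨j, rfl⟩, hj⟩ := Set.not_subset.mp hnot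
    simp only [Set.mem_iUnion, Finset.mem_coe, mem_ball, not_exists, not_lt] at hj
    exact ⟨j, trivial, fun i hi => dist_comm (f i) (f j) ▸ hj i hi⟩
  obtain ⟨u, -, hu⟩ := exists_seq_of_forall_finset_exists _ _ hnext
  refine ⟨r, hr, u, fun m n hmn => ?_⟩
  rcases hmn.lt_or_gt with hlt | hlt
  · exact hu m n hlt
  · exact dist_comm (f (u n)) (f (u m)) ▸ hu n m hlt

end SeparatedSequence

theorem MeasureTheory.eq_zero_of_le_measure_of_pairwise_disjoint {Ω ι : Type*}
    [MeasurableSpace Ω] [Countable ι] [Infinite ι] {μ : Measure Ω} [IsFiniteMeasure μ]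
    {B : ι → Set Ω} (hB : ∀ n, MeasurableSet (B n)) (hdisj : Pairwise (Disjoint on B))
    {b : ℝ≥0∞} (hb : ∀ n, b ≤ μ (B n)) : b = 0 := by
  by_contra hb0
  have hsum : ∑' n, μ (B n) = ∞ :=
    top_unique ((ENNReal.tsum_const_eq_top_of_ne_zero hb0).ge.trans (ENNReal.tsum_le_tsum hb))
  rw [← measure_iUnion hdisj hB] at hsum
  exact measure_ne_top μ _ hsum

section Privacy

variable {X Y Z : Type*} [PseudoMetricSpace X] [MeasurableSpace Y]

def DifferentiallyPrivate (ε : ℝ) (M : X → Measure Y) : Prop :=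
  ∀ x z : X, ∀ T : Set Y, MeasurableSet T →
    M x T ≤ ENNReal.ofReal (Real.exp (ε * dist x z)) * M z T

theorem DifferentiallyPrivate.comp_lipschitzWith [PseudoMetricSpace Z] {ε : ℝ}
    {M : Z → Measure Y} (hM : DifferentiallyPrivate ε M) (hε : 0 ≤ ε) {K : ℝ≥0} {f : X → Z}
    (hf : LipschitzWith K f) : DifferentiallyPrivate (K * ε) (M ∘ f) := by
  intro x z T hT
  refine (hM (f x) (f z) T hT).trans (mul_le_mul_left (ENNReal.ofReal_le_ofReal ?_) _)
  rw [exp_le_exp, mul_comm (K : ℝ), mul_assoc]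
  exact mul_le_mul_of_nonneg_left (hf.dist_le_mul x z) hε

theorem DifferentiallyPrivate.not_pairwise_le_dist [PseudoMetricSpace Y]
    [OpensMeasurableSpace Y] {D ε : ℝ} {M : X → Measure Y} [∀ x, IsFiniteMeasure (M x)]
    (hX : ∀ x z : X, dist x z ≤ D) (hM : DifferentiallyPrivate ε M) (hε : 0 ≤ ε)
    {f : X → Y} {γ : ℝ} {a : ℝ≥0∞} (ha : a ≠ 0) (hutil : ∀ x, a ≤ M x (ball (f x) γ))
    (u : ℕ → X) : ¬Pairwise fun m n => 2 * γ ≤ dist (f (u m)) (f (u n)) := by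
  intro hsep
  have hdisj : Pairwise (Disjoint on fun n => ball (f (u n)) γ) := fun m n hmn =>
    ball_disjoint_ball (by linarith [hsep hmn])
  have hlow : ∀ n, a / ENNReal.ofReal (exp (ε * D)) ≤ M (u 0) (ball (f (u n)) γ) := by
    intro n
    refine ENNReal.div_le_of_le_mul ?_
    calc a ≤ M (u n) (ball (f (u n)) γ) := hutil (u n)
      _ ≤ ENNReal.ofReal (exp (ε * dist (u n) (u 0))) * M (u 0) (ball (f (u n)) γ) :=
        hM _ _ _ measurableSet_ball
      _ ≤ M (u 0) (ball (f (u n)) γ) * ENNReal.ofReal (exp (ε * D)) := by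
        rw [mul_comm]
        gcongr
        exact hX _ _
  have hzero := eq_zero_of_le_measure_of_pairwise_disjoint (fun _ => measurableSet_ball) hdisj hlow
  simp [ENNReal.div_eq_zero_iff, ha] at hzero

end Privacy

section ExponentialMechanism

variable {Y : Type*} [PseudoMetricSpace Y] {s : Finset Y} {c : ℝ} {y y' i : Y}

noncomputable def expProb (s : Finset Y) (c : ℝ) (y i : Y) : ℝ :=
  exp (-(c * dist y i)) / ∑ j ∈ s, exp (-(c * dist y j))

theorem expProb_nonneg : 0 ≤ expProb s c y i := by
  unfold expProb
  positivity

theorem sum_expProb (hs : s.Nonempty) : ∑ i ∈ s, expProb s c y i = 1 := by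
  simp only [expProb, ← Finset.sum_div]
  exact div_self (Finset.sum_pos (fun _ _ => exp_pos _) hs).ne'

theorem exp_neg_mul_dist_le (hc : 0 ≤ c) (y y' i : Y) :
    exp (-(c * dist y i)) ≤ exp (c * dist y y') * exp (-(c * dist y' i)) := by
  rw [← exp_add, exp_le_exp]
  nlinarith [dist_triangle_left y' i y, dist_comm y y']

theorem expProb_le_exp_mul_expProb (hc : 0 ≤ c) (hi : i ∈ s) :
    expProb s c y i ≤ exp (2 * c * dist y y') * expProb s c y' i := by
  have hZ : ∀ y, 0 < ∑ j ∈ s, exp (-(c * dist y j)) :=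
    fun y => Finset.sum_pos (fun _ _ => exp_pos _) ⟨i, hi⟩
  have hZle : ∑ j ∈ s, exp (-(c * dist y' j)) ≤
      exp (c * dist y y') * ∑ j ∈ s, exp (-(c * dist y j)) := by
    rw [Finset.mul_sum]
    exact Finset.sum_le_sum fun j _ => dist_comm y y' ▸ exp_neg_mul_dist_le hc y' y j
  calc expProb s c y i
      ≤ exp (c * dist y y') * exp (-(c * dist y' i)) /
          ((∑ j ∈ s, exp (-(c * dist y' j))) / exp (c * dist y y')) := by
        refine div_le_div₀ (by positivity) (exp_neg_mul_dist_le hc y y' i)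
          (div_pos (hZ y') (exp_pos _)) ?_
        rw [div_le_iff₀' (exp_pos _)]
        exact hZle
    _ = exp (2 * c * dist y y') * expProb s c y' i := by
        rw [expProb, two_mul, add_mul, exp_add]
        field_simp

theorem expProb_le_exp_neg (hc : 0 ≤ c) {i₀ : Y} (hi₀ : i₀ ∈ s) {r R : ℝ} (hr : dist y i₀ ≤ r)
    (hR : R ≤ dist y i) : expProb s c y i ≤ exp (-(c * (R - r))) := by
  have hZ : exp (-(c * r)) ≤ ∑ j ∈ s, exp (-(c * dist y j)) :=
    (exp_le_exp.mpr (by nlinarith)).trans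
      (Finset.single_le_sum (fun j _ => (exp_pos _).le) hi₀)
  calc expProb s c y i ≤ exp (-(c * R)) / exp (-(c * r)) :=
        div_le_div₀ (exp_pos _).le (exp_le_exp.mpr (by nlinarith)) (exp_pos _) hZ
    _ = exp (-(c * (R - r))) := by rw [← exp_sub]; ring_nf

open scoped Classical

variable [MeasurableSpace Y]

noncomputable def expMechanism (s : Finset Y) (c : ℝ) (y : Y) : Measure Y :=
  ∑ i ∈ s, ENNReal.ofReal (expProb s c y i) • Measure.dirac i

theorem expMechanism_apply {T : Set Y} (hT : MeasurableSet T) :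
    expMechanism s c y T = ENNReal.ofReal (∑ i ∈ s with i ∈ T, expProb s c y i) := by
  rw [ENNReal.ofReal_sum_of_nonneg fun _ _ => expProb_nonneg, Finset.sum_filter,
    expMechanism, Measure.finsetSum_apply]
  refine Finset.sum_congr rfl fun i _ => ?_
  by_cases hi : i ∈ T <;> simp [Measure.dirac_apply' _ hT, hi]

theorem isProbabilityMeasure_expMechanism (hs : s.Nonempty) :
    IsProbabilityMeasure (expMechanism s c y) :=
  ⟨by simp [expMechanism_apply MeasurableSet.univ, sum_expProb hs]⟩

theorem differentiallyPrivate_expMechanism (hc : 0 ≤ c) :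
    DifferentiallyPrivate (2 * c) (expMechanism s c) := by
  intro y y' T hT
  rw [expMechanism_apply hT, expMechanism_apply hT, ← ENNReal.ofReal_mul (exp_pos _).le,
    Finset.mul_sum]
  exact ENNReal.ofReal_le_ofReal (Finset.sum_le_sum fun i hi =>
    expProb_le_exp_mul_expProb hc (Finset.mem_filter.mp hi).1)

theorem ofReal_le_expMechanism_ball [OpensMeasurableSpace Y] (hc : 0 ≤ c) {i₀ : Y}
    (hi₀ : i₀ ∈ s) {r R : ℝ} (hr : dist y i₀ ≤ r) :
    ENNReal.ofReal (1 - s.card * exp (-(c * (R - r)))) ≤ expMechanism s c y (ball y R) := by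
  rw [expMechanism_apply measurableSet_ball]
  refine ENNReal.ofReal_le_ofReal ?_
  have hfar :
      ∑ i ∈ s with i ∉ ball y R, expProb s c y i ≤ s.card * exp (-(c * (R - r))) := by
    refine (Finset.sum_le_card_nsmul _ _ (exp (-(c * (R - r)))) fun i hi => ?_).trans ?_
    · refine expProb_le_exp_neg hc hi₀ hr ?_
      simpa [dist_comm] using (Finset.mem_filter.mp hi).2
    · rw [nsmul_eq_mul]
      gcongr
      exact Finset.filter_subset _ _
  have hsplit := Finset.sum_filter_add_sum_filter_not s (· ∈ ball y R) (expProb s c y)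
  rw [sum_expProb ⟨i₀, hi₀⟩] at hsplit
  linarith

end ExponentialMechanism

theorem exists_pos_mul_exp_neg_mul_le (n : ℝ) {a δ : ℝ} (ha : 0 < a) (hδ : 0 < δ) :
    ∃ c > 0, n * exp (-(c * a)) ≤ δ := by
  have hlim : Tendsto (fun c => n * exp (-(c * a))) atTop (𝓝 0) := by
    simpa using
      (tendsto_exp_neg_atTop_nhds_zero.comp (tendsto_id.atTop_mul_const ha)).const_mul n
  obtain ⟨c, hcδ, hc⟩ := ((hlim.eventually (ge_mem_nhds hδ)).and (eventually_gt_atTop 0)).exists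
  exact ⟨c, hc, hcδ⟩

theorem privacy_compatible_iff_totallyBounded_general {X Y : Type*}
    [MetricSpace X] [MetricSpace Y] [MeasurableSpace Y] [BorelSpace Y]
    (hX : ∀ x z : X, dist x z ≤ 1)
    (f : X → Y) (hf : ∀ x z : X, dist (f x) (f z) ≤ dist x z) :
    (∀ γ > (0:ℝ), ∀ δ ∈ Set.Ioo (0:ℝ) 1, ∃ ε > (0:ℝ), ∃ M : X → Measure Y,
      (∀ x, IsProbabilityMeasure (M x)) ∧
      (∀ x z : X, ∀ T : Set Y, MeasurableSet T →
        M x T ≤ ENNReal.ofReal (Real.exp (ε * dist x z)) * M z T) ∧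
      (∀ x : X, ENNReal.ofReal (1 - δ) ≤ M x (Metric.ball (f x) γ))) ↔
    TotallyBounded (Set.range f) := by
  constructor
  · intro h
    by_contra hTB
    obtain ⟨r, hr, u, hsep⟩ := exists_pairwise_le_dist_of_not_totallyBounded_range hTB
    obtain ⟨ε, hε, M, hprob, hdp, hutil⟩ :=
      h (r / 2) (by positivity) (1 / 2) ⟨by norm_num, by norm_num⟩
    refine DifferentiallyPrivate.not_pairwise_le_dist hX hdp hε.le (by norm_num) hutil u ?_
    simpa [mul_div_cancel₀] using hsep
  · intro hTB γ hγ δ hδ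
    obtain ⟨t, ht, hcover⟩ := totallyBounded_iff.mp hTB (γ / 2) (by positivity)
    have hnet : ∀ x, ∃ i ∈ ht.toFinset, dist (f x) i ≤ γ / 2 := fun x => by
      obtain ⟨i, hi, hxi⟩ := Set.mem_iUnion₂.mp (hcover ⟨x, rfl⟩)
      exact ⟨i, ht.mem_toFinset.mpr hi, (mem_ball.mp hxi).le⟩
    obtain ⟨c, hc, hcδ⟩ := exists_pos_mul_exp_neg_mul_le ht.toFinset.card (half_pos hγ) hδ.1
    refine ⟨2 * c, by positivity, expMechanism ht.toFinset c ∘ f, fun x => ?_, ?_, fun x => ?_⟩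
    · obtain ⟨i, hi, -⟩ := hnet x
      exact isProbabilityMeasure_expMechanism ⟨i, hi⟩
    · have hlip : LipschitzWith 1 f := .of_dist_le_mul fun x z => by simpa using hf x z
      have hdp := (differentiallyPrivate_expMechanism (s := ht.toFinset) hc.le).comp_lipschitzWith
        (by positivity) hlip
      rwa [NNReal.coe_one, one_mul] at hdp
    · obtain ⟨i, hi, hxi⟩ := hnet x
      refine le_trans ?_ (ofReal_le_expMechanism_ball hc.le hi hxi)
      rw [sub_half]
      exact ENNReal.ofReal_le_ofReal (by linarith)

/-- for a 1-Lipschitz `f : X → Y` on a nonempty `X` of diameter at most `1`,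
`f` is privacy-compatible if and only if its image `f(X)` is totally bounded. -/
theorem privacy_compatible_iff_totallyBounded {X Y : Type*}
    [MetricSpace X] [MetricSpace Y] [Nonempty X] [MeasurableSpace Y] [BorelSpace Y]
    (hX : ∀ x z : X, dist x z ≤ 1)
    (f : X → Y) (hf : ∀ x z : X, dist (f x) (f z) ≤ dist x z) :
    (∀ γ > (0:ℝ), ∀ δ ∈ Set.Ioo (0:ℝ) 1, ∃ ε > (0:ℝ), ∃ M : X → Measure Y,
      (∀ x, IsProbabilityMeasure (M x)) ∧
      (∀ x z : X, ∀ T : Set Y, MeasurableSet T →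
        M x T ≤ ENNReal.ofReal (Real.exp (ε * dist x z)) * M z T) ∧
      (∀ x : X, ENNReal.ofReal (1 - δ) ≤ M x (Metric.ball (f x) γ))) ↔
    TotallyBounded (Set.range f) :=
  privacy_compatible_iff_totallyBounded_general hX f hf
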